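/- For the discrete-time modified system with frozen dynamics on K, the recursive value W₁^k(s) equals Δt times min(k, M(s)), where M(s) is the supremum over control sequences of the first step index at which the trajectory enters K (∞ if some infinite sequence avoids K forever). -/

import Mathlib

open scoped ENat

/-- Discrete-time trajectory: `s₀ = s`, `s_{j+1} = F(s_j, u_j)`. -/
def traj {S U : Type*} (F : S → U → S) (us : ℕ → U) (s : S) : ℕ → S
  | 0 => s
  | j + 1 => F (traj F us s j) (us j)

/-- The recursively defined max-value function. -/
noncomputable def W1 {S U : Type*} (F : S → U → S) (c : S → ℝ) (dt : ℝ) :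
    ℕ → S → ℝ
  | 0, _ => 0
  | k + 1, s => ⨆ u : U, (c s * dt + W1 F c dt k (F s u))

section Aux

variable {S U : Type*}

lemma traj_shift (F : S → U → S) (us : ℕ → U) (s : S) :
    ∀ j, traj F us s (j + 1) = traj F (fun n => us (n + 1)) (F s (us 0)) j
  | 0 => rfl
  | j + 1 => by
    show F (traj F us s (j+1)) (us (j+1)) = _
    rw [traj_shift F us s j]; rfl

/-- Sup-of-first-hitting-time. -/
noncomputable def Mhit (F : S → U → S) (K : Set S) (s : S) : ℕ∞ :=
  ⨆ us : ℕ → U, sInf ((fun j : ℕ => (j : ℕ∞)) '' {j : ℕ | traj F us s j ∈ K})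

lemma sInf_one_add_image (A : Set ℕ∞) :
    sInf ((fun x => 1 + x) '' A) = 1 + sInf A := by
  rcases A.eq_empty_or_nonempty with rfl | hA
  · simp
  · apply le_antisymm
    · exact sInf_le ⟨sInf A, csInf_mem hA, rfl⟩
    · exact le_sInf (by rintro x ⟨a, ha, rfl⟩; exact add_le_add_right (sInf_le ha) 1)

lemma Mhit_mem (F : S → U → S) {K : Set S} {s : S} (hs : s ∈ K) : Mhit F K s = 0 := by
  refine le_antisymm (iSup_le fun us => ?_) bot_le
  exact sInf_le ⟨0, by simpa [traj] using hs, rfl⟩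

lemma Mhit_not_mem [Nonempty U] (F : S → U → S) {K : Set S} {s : S} (hs : s ∉ K) :
    Mhit F K s = 1 + ⨆ u : U, Mhit F K (F s u) := by
  have key : ∀ us : ℕ → U,
      sInf ((fun j : ℕ => (j : ℕ∞)) '' {j : ℕ | traj F us s j ∈ K}) =
      1 + sInf ((fun j : ℕ => (j : ℕ∞)) ''
        {j : ℕ | traj F (fun n => us (n+1)) (F s (us 0)) j ∈ K}) := by
    intro us
    rw [← sInf_one_add_image]
    congr 1
    ext x
    constructor
    · rintro ⟨j, hj, rfl⟩
      cases j with
      | zero => exact absurd hj hs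
      | succ j =>
        refine ⟨(j : ℕ∞), ⟨j, ?_, rfl⟩, ?_⟩
        · simpa [traj_shift F us s j] using hj
        · push_cast; ring
    · rintro ⟨x, ⟨j, hj, rfl⟩, rfl⟩
      refine ⟨j + 1, ?_, by push_cast; ring⟩
      simpa [traj_shift F us s j] using hj
  have h2 : (⨆ us : ℕ → U, sInf ((fun j : ℕ => (j : ℕ∞)) ''
      {j : ℕ | traj F (fun n => us (n+1)) (F s (us 0)) j ∈ K})) =
      ⨆ u : U, Mhit F K (F s u) := by
    apply le_antisymm
    · refine iSup_le fun us => ?_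
      refine le_trans ?_ (le_iSup (fun u => Mhit F K (F s u)) (us 0))
      exact le_iSup (fun us' : ℕ → U => sInf ((fun j : ℕ => (j : ℕ∞)) ''
        {j : ℕ | traj F us' (F s (us 0)) j ∈ K})) (fun n => us (n+1))
    · refine iSup_le fun u => iSup_le fun us => ?_
      exact le_iSup_of_le (fun n => Nat.casesOn n u us) le_rfl
  calc Mhit F K s = ⨆ us : ℕ → U, (1 + sInf ((fun j : ℕ => (j : ℕ∞)) ''
      {j : ℕ | traj F (fun n => us (n+1)) (F s (us 0)) j ∈ K})) := by
        unfold Mhit; simp only [key]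
    _ = 1 + ⨆ us : ℕ → U, sInf ((fun j : ℕ => (j : ℕ∞)) ''
      {j : ℕ | traj F (fun n => us (n+1)) (F s (us 0)) j ∈ K}) := (ENat.add_iSup _).symm
    _ = _ := by rw [h2]

end Aux

/-- For frozen dynamics on `K` and cost `c̄ = 1` off `K`, `0` on `K`, the recursive
max-value satisfies `W₁^k(s) = Δt · min(k, M(s))`, where `M(s) ∈ ℕ∞` is the supremum
over control sequences of the first step index at which the trajectory enters `K`
(∞ if some sequence avoids `K` forever), with `min(k, ∞) = k`. -/
theorem stmt15 {S U : Type*} [Fintype U] [Nonempty U]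
    (K : Set S) [DecidablePred (· ∈ K)] (F : S → U → S)
    (hF : ∀ s ∈ K, ∀ u, F s u = s)
    (dt : ℝ) (hdt : 0 < dt) (k : ℕ) (s : S) :
    W1 F (fun s' => if s' ∈ K then (0:ℝ) else 1) dt k s =
      dt * ((min (k : ℕ∞)
        (⨆ us : ℕ → U, sInf ((fun j : ℕ => (j : ℕ∞)) ''
          {j : ℕ | traj F us s j ∈ K}))).toNat : ℝ) := by
  have hM : ∀ s : S, (⨆ us : ℕ → U, sInf ((fun j : ℕ => (j : ℕ∞)) ''
      {j : ℕ | traj F us s j ∈ K})) = Mhit F K s := fun _ => rfl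
  rw [hM]
  induction k generalizing s with
  | zero => simp [W1]
  | succ k ih =>
    by_cases hs : s ∈ K
    · have h0 : Mhit F K s = 0 := Mhit_mem F hs
      have : W1 F (fun s' => if s' ∈ K then (0:ℝ) else 1) dt (k+1) s =
          W1 F (fun s' => if s' ∈ K then (0:ℝ) else 1) dt k s := by
        show (⨆ u : U, _) = _
        simp only [hs, if_true, zero_mul, zero_add, hF s hs]
        exact ciSup_const
      rw [this, ih, h0]
      simp
    · -- choose a maximizer u₀
      obtain ⟨u₀, hu₀⟩ := exists_eq_ciSup_of_finite (f := fun u : U => Mhit F K (F s u))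
      have hle : ∀ u : U, Mhit F K (F s u) ≤ Mhit F K (F s u₀) := by
        intro u; rw [hu₀]; exact le_iSup (fun u : U => Mhit F K (F s u)) u
      have hmin_ne : ∀ u : U, min (k : ℕ∞) (Mhit F K (F s u)) ≠ ⊤ := by
        intro u
        exact ne_top_of_le_ne_top (by simp) (min_le_left _ _)
      have hmono : ∀ u : U, ((min (k : ℕ∞) (Mhit F K (F s u))).toNat : ℝ) ≤
          ((min (k : ℕ∞) (Mhit F K (F s u₀))).toNat : ℝ) := by
        intro u
        exact_mod_cast ENat.toNat_le_toNat (min_le_min le_rfl (hle u)) (hmin_ne u₀)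
      -- LHS
      have hLHS : W1 F (fun s' => if s' ∈ K then (0:ℝ) else 1) dt (k+1) s =
          dt + dt * ((min (k : ℕ∞) (Mhit F K (F s u₀))).toNat : ℝ) := by
        show (⨆ u : U, _) = _
        simp only [hs, if_false, one_mul]
        apply le_antisymm
        · refine ciSup_le fun u => ?_
          rw [ih]
          exact add_le_add_right (mul_le_mul_of_nonneg_left (hmono u) hdt.le) dt
        · have := le_ciSup (f := fun u : U =>
            dt + W1 F (fun s' => if s' ∈ K then (0:ℝ) else 1) dt k (F s u))
            (Finite.bddAbove_range _) u₀
          rw [ih] at this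
          exact this
      rw [hLHS]
      -- RHS
      have hMs : Mhit F K s = 1 + Mhit F K (F s u₀) := by
        rw [Mhit_not_mem F hs, hu₀]
      have hRHS : min ((k+1 : ℕ) : ℕ∞) (Mhit F K s) =
          1 + min (k : ℕ∞) (Mhit F K (F s u₀)) := by
        rw [hMs]
        have : ((k+1 : ℕ) : ℕ∞) = 1 + (k : ℕ∞) := by push_cast; ring
        rw [this, min_add_add_left]
      rw [hRHS, ENat.toNat_add (by simp) (hmin_ne u₀)]
      have h1 : (1 : ℕ∞).toNat = 1 := rfl
      rw [h1]
      push_cast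
      ring
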